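/- Let G* be as above (G plus a (p−4)-clique K joined completely to G, plus a 4-clique L joined completely to K). Fix p-colourings α', β' of G* that agree on K ∪ L, give the vertices of K ∪ L the p distinct colours 1,…,p, and restrict to 4-colourings α, β of G using colours {1,2,3,4} on V(G). Then there is a path from α' to β' in R_p(G*) if and only if there is a path from α to β in R_4(G). -/

import Mathlib

open SimpleGraph

/-- `c` is a proper colouring of `G` with colours in `Fin p`. -/
def Proper {V : Type*} {p : ℕ} (G : SimpleGraph V) (c : V → Fin p) : Prop :=
  ∀ u v, G.Adj u v → c u ≠ c v

/-- Two colourings are adjacent in the reconfiguration graph iff they differ on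
exactly one vertex. -/
def ReconfAdj {V : Type*} {p : ℕ} (c c' : V → Fin p) : Prop :=
  ∃ v, c v ≠ c' v ∧ ∀ w, w ≠ v → c w = c' w

/-- There is a path between the colourings `α` and `β` in the reconfiguration graph
`R_p(G)`: a sequence of proper colourings from `α` to `β`, consecutive ones
differing on exactly one vertex. -/
def ReconfPath {V : Type*} {p : ℕ} (G : SimpleGraph V) (α β : V → Fin p) : Prop :=
  ∃ (t : ℕ) (f : ℕ → V → Fin p), f 0 = α ∧ f t = β ∧
    (∀ i ≤ t, Proper G (f i)) ∧ (∀ i < t, ReconfAdj (f i) (f (i + 1)))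

/-- The graph `G*` obtained from `G` by adding a `(p-4)`-clique `K` joined completely
to `G`, and a `4`-clique `L` joined completely to `K` but not to `G`. -/
def gStar {V : Type*} (G : SimpleGraph V) (p : ℕ) :
    SimpleGraph (V ⊕ (Fin (p - 4) ⊕ Fin 4)) :=
  SimpleGraph.fromRel (fun a b =>
    match a, b with
    | Sum.inl u, Sum.inl v => G.Adj u v
    | Sum.inl _, Sum.inr (Sum.inl _) => True
    | Sum.inr _, Sum.inr _ => True
    | _, _ => False)

/-- The `p`-colouring of `G*` extending a `4`-colouring `c` of `G` (using colours
`0,1,2,3` on `V(G)`), colouring the vertex `xᵢ` of `K` with colour `i + 4` and the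
vertex `y_h` of `L` with colour `h`. -/
def liftColouring {V : Type*} (p : ℕ) (hp : 5 ≤ p) (c : V → Fin 4) :
    V ⊕ (Fin (p - 4) ⊕ Fin 4) → Fin p
  | Sum.inl v => ⟨(c v).val, by have := (c v).isLt; omega⟩
  | Sum.inr (Sum.inl i) => ⟨i.val + 4, by have := i.isLt; omega⟩
  | Sum.inr (Sum.inr h) => ⟨h.val, by have := h.isLt; omega⟩

section Aux
variable {V : Type*} {G : SimpleGraph V} {p : ℕ}

lemma adj_inl_inl {u v : V} (h : G.Adj u v) :
    (gStar G p).Adj (Sum.inl u) (Sum.inl v) := by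
  simp only [gStar, fromRel_adj]
  exact ⟨by simpa using G.ne_of_adj h, Or.inl h⟩

lemma adj_inl_inrK (v : V) (i : Fin (p-4)) :
    (gStar G p).Adj (Sum.inl v) (Sum.inr (Sum.inl i)) := by
  simp [gStar, fromRel_adj]

lemma adj_inr_inr {a b : Fin (p-4) ⊕ Fin 4} (h : a ≠ b) :
    (gStar G p).Adj (Sum.inr a) (Sum.inr b) := by
  simp [gStar, fromRel_adj, h]

lemma adj_of_gStar_inl_inl {u v : V} (h : (gStar G p).Adj (Sum.inl u) (Sum.inl v)) :
    G.Adj u v := by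
  simp only [gStar, fromRel_adj] at h
  rcases h with ⟨_, h | h⟩
  · exact h
  · exact h.symm

lemma lift_proper (hp : 5 ≤ p) {c : V → Fin 4} (hc : Proper G c) :
    Proper (gStar G p) (liftColouring p hp c) := by
  rintro (u | (i | h)) (v | (j | h')) hadj hval
  · exact hc u v (adj_of_gStar_inl_inl hadj) (by
      have := congrArg Fin.val hval
      simp only [liftColouring] at this
      exact Fin.ext this)
  · have := congrArg Fin.val hval
    simp only [liftColouring] at this
    have := (c u).isLt; omega
  · simp only [gStar, fromRel_adj] at hadj
    exact hadj.2.elim (fun h => h) (fun h => h)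
  · have := congrArg Fin.val hval
    simp only [liftColouring] at this
    have := (c v).isLt; omega
  · have := congrArg Fin.val hval
    simp only [liftColouring] at this
    have : i = j := Fin.ext (by omega)
    subst this
    exact hadj.ne rfl
  · have := congrArg Fin.val hval
    simp only [liftColouring] at this
    have := h'.isLt; omega
  · simp only [gStar, fromRel_adj] at hadj
    exact hadj.2.elim (fun h => h) (fun h => h)
  · have := congrArg Fin.val hval
    simp only [liftColouring] at this
    have := h.isLt; omega
  · have := congrArg Fin.val hval
    simp only [liftColouring] at this
    have : h = h' := Fin.ext this
    subst this
    exact hadj.ne rfl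

lemma restrict_proper (hp : 5 ≤ p) {c : V → Fin 4}
    (hc : Proper (gStar G p) (liftColouring p hp c)) : Proper G c := by
  intro u v huv hval
  exact hc (Sum.inl u) (Sum.inl v) (adj_inl_inl huv) (by
    simp only [liftColouring]
    exact Fin.ext (by simpa using congrArg Fin.val hval))

end Aux

/-- Let `α`, `β` be `4`-colourings of `G` and let `α'`, `β'` be the corresponding
`p`-colourings of `G*` (agreeing on `K ∪ L`, where they use the `p` distinct colours
described above). Then there is a path from `α'` to `β'` in `R_p(G*)` iff there is a
path from `α` to `β` in `R_4(G)`. -/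
theorem gStar_reconf_iff {V : Type*} (G : SimpleGraph V) (p : ℕ) (hp : 5 ≤ p)
    (α β : V → Fin 4) (hα : Proper G α) (hβ : Proper G β) :
    ReconfPath (gStar G p) (liftColouring p hp α) (liftColouring p hp β) ↔
      ReconfPath G α β := by
  classical
  constructor
  · rintro ⟨t, f, h0, ht, hprop, hadj⟩
    have key : ∀ i ≤ t, ∃ c : V → Fin 4,
        f i = liftColouring p hp c ∧ ReconfPath G α c := by
      intro i hi
      induction i with
      | zero =>
        exact ⟨α, h0, 0, fun _ => α, rfl, rfl,
          fun _ _ => hα, fun j hj => absurd hj (Nat.not_lt_zero j)⟩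
      | succ n ih =>
        obtain ⟨c, hfc, hcpath⟩ := ih (Nat.le_of_succ_le hi)
        obtain ⟨v₀, hv₀ne, hv₀eq⟩ := hadj n (Nat.lt_of_succ_le hi)
        have hpn1 : Proper (gStar G p) (f (n+1)) := hprop (n+1) hi
        rw [hfc] at hv₀ne
        match v₀ with
        | Sum.inr a =>
          exfalso
          set x := f (n+1) (Sum.inr a) with hx
          have hall : ∀ b, x ≠ liftColouring p hp c (Sum.inr b) := by
            intro b
            by_cases hb : b = a
            · subst hb
              exact hv₀ne.symm
            · have heq : f (n+1) (Sum.inr b) = liftColouring p hp c (Sum.inr b) := by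
                rw [← hv₀eq (Sum.inr b) (by simpa using hb), hfc]
              rw [← heq]
              exact hpn1 (Sum.inr a) (Sum.inr b)
                (adj_inr_inr (fun h => hb h.symm))
          rcases lt_or_ge x.val 4 with h4 | h4
          · exact hall (Sum.inr ⟨x.val, h4⟩) (Fin.ext rfl)
          · exact hall (Sum.inl ⟨x.val - 4, by have := x.isLt; omega⟩)
              (Fin.ext (by simp only [liftColouring]; omega))
        | Sum.inl v =>
          set x := f (n+1) (Sum.inl v) with hx
          have hK : ∀ j : Fin (p-4), x.val ≠ j.val + 4 := by
            intro j hxj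
            have heq : f (n+1) (Sum.inr (Sum.inl j)) =
                liftColouring p hp c (Sum.inr (Sum.inl j)) := by
              rw [← hv₀eq (Sum.inr (Sum.inl j)) (by simp), hfc]
            exact hpn1 (Sum.inl v) (Sum.inr (Sum.inl j)) (adj_inl_inrK v j)
              (by rw [heq]; exact Fin.ext hxj)
          have h4 : x.val < 4 := by
            by_contra h4
            exact hK ⟨x.val - 4, by have := x.isLt; omega⟩
              (show x.val = x.val - 4 + 4 by omega)
          set c' : V → Fin 4 := Function.update c v ⟨x.val, h4⟩ with hc'
          have hfc' : f (n+1) = liftColouring p hp c' := by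
            funext w
            match w with
            | Sum.inl u =>
              by_cases hu : u = v
              · subst hu
                simp only [liftColouring, hc', Function.update_self]
                rfl
              · rw [← hv₀eq (Sum.inl u) (by simpa using hu), hfc]
                simp only [liftColouring, hc', Function.update_of_ne hu]
            | Sum.inr b =>
              rw [← hv₀eq (Sum.inr b) (by simp), hfc]
              rcases b with i | h <;> rfl
          have hc'prop : Proper G c' := restrict_proper hp (hfc' ▸ hpn1)
          have hcadjc' : ReconfAdj c c' := by
            refine ⟨v, ?_, fun w hw => by
              simp only [hc', Function.update_of_ne hw]⟩
            intro h
            apply hv₀ne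
            rw [hx, hfc']
            simp only [liftColouring, h]
          obtain ⟨tc, fc, hc0, hct, hcprop, hcadj⟩ := hcpath
          refine ⟨c', hfc', tc + 1, fun j => if j ≤ tc then fc j else c', ?_, ?_, ?_, ?_⟩
          · simp [hc0]
          · simp
          · intro j hj
            by_cases hjt : j ≤ tc
            · simpa [hjt] using hcprop j hjt
            · simpa [hjt] using hc'prop
          · intro j hj
            by_cases hjt : j < tc
            · have h1 : j ≤ tc := le_of_lt hjt
              have h2 : j + 1 ≤ tc := hjt
              simpa [h1, h2] using hcadj j hjt
            · have hjeq : j = tc := by omega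
              have h1 : j ≤ tc := by omega
              have h2 : ¬ (j + 1 ≤ tc) := by omega
              simpa [h1, h2, hjeq, hct] using hcadjc'
    obtain ⟨c, hfc, hpath⟩ := key t le_rfl
    have hcβ : c = β := by
      funext v
      have := congrArg (fun g => (g (Sum.inl v)).val)
        (ht ▸ hfc : liftColouring p hp β = liftColouring p hp c)
      simp only [liftColouring] at this
      exact Fin.ext this.symm
    exact hcβ ▸ hpath
  · rintro ⟨t, f, h0, ht, hprop, hadj⟩
    refine ⟨t, fun i => liftColouring p hp (f i), by simp [h0], by simp [ht],
      fun i hi => lift_proper hp (hprop i hi), fun i hi => ?_⟩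
    obtain ⟨v, hv, hv'⟩ := hadj i hi
    refine ⟨Sum.inl v, ?_, ?_⟩
    · intro h
      apply hv
      exact Fin.ext (by simpa [liftColouring] using congrArg Fin.val h)
    · rintro (w | w) hw
      · simp only [liftColouring]
        exact Fin.ext (by
          have := hv' w (by rintro rfl; exact hw rfl)
          simp [this])
      · rcases w with i | h <;> rfl
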